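/- arXiv:math/0110077 — 3 statements merged into one kernel-verified Lean document; each statement's English description precedes it below -/
import Mathlib

section
/- For all integers p, q ≥ 0, every sequence a = (aᵢ)_{i∈ℤ} and every n ≥ 1, the following identity of polynomials in (x₁,…,xₙ;y₁,…,yₙ) holds: s_{(p+1|q);a} + s_{(p|q+1);a} + (a_{p+1} + â_{q+1})·s_{(p|q);a} = s_{(p|0);a} · s_{(0|q);a}. -/
open Finset

noncomputable section

/-- `μ : ℕ → ℕ` (0-indexed: `μ i` is the `(i+1)`-st part) is a partition. -/
def IsPartition (μ : ℕ → ℕ) : Prop := Antitone μ ∧ ∃ N, ∀ i, N ≤ i → μ i = 0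

/-- number of boxes `|μ|` -/
def psize (μ : ℕ → ℕ) : ℕ := Nat.card {p : ℕ × ℕ // p.2 < μ p.1}

/-- number of nonzero parts `ℓ(μ)` -/
def plen (μ : ℕ → ℕ) : ℕ := Nat.card {i : ℕ // 0 < μ i}

/-- conjugate partition (0-indexed) -/
def conjP (μ : ℕ → ℕ) : ℕ → ℕ := fun j => Nat.card {i : ℕ // j < μ i}

/-- depth `d(μ)`: the number of `i ≥ 1` (1-indexed) with `μᵢ ≥ i` -/
def depth (μ : ℕ → ℕ) : ℕ := Nat.card {i : ℕ // i < μ i}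

/-- containment of Young diagrams -/
def subP (μ ν : ℕ → ℕ) : Prop := ∀ i, μ i ≤ ν i

/-- `dim(μ,ν)`: number of saturated chains `μ = λ⁰ ⊂ λ¹ ⊂ ⋯ ⊂ λᵏ = ν`,
  `k = |ν| - |μ|`, `|λᵗ| = |μ| + t`. -/
def relDim (μ ν : ℕ → ℕ) : ℕ :=
  Nat.card {c : Fin (psize ν - psize μ + 1) → (ℕ → ℕ) //
    c 0 = μ ∧ c (Fin.last _) = ν ∧ (∀ t, IsPartition (c t)) ∧
    ∀ t : Fin (psize ν - psize μ),
      subP (c t.castSucc) (c t.succ) ∧ psize (c t.succ) = psize (c t.castSucc) + 1}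

/-- `dim ν` : number of standard tableaux of shape `ν` -/
def dimP (ν : ℕ → ℕ) : ℕ := relDim (fun _ => 0) ν

/-- the hook partition `(p|q) = (p+1, 1^q)` -/
def hookP (p q : ℕ) : ℕ → ℕ := fun i => if i = 0 then p + 1 else if i ≤ q then 1 else 0

/-- Frobenius coordinate `pᵢ = μᵢ - i` (0-indexed input `i`) -/
def frobP (μ : ℕ → ℕ) (i : ℕ) : ℕ := μ i - (i + 1)
/-- Frobenius coordinate `qᵢ = μ'ᵢ - i` (0-indexed input `i`) -/
def frobQ (μ : ℕ → ℕ) (i : ℕ) : ℕ := conjP μ i - (i + 1)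

/-- the ring of polynomials in `x₁,…,xₙ, y₁,…,yₙ` over `ℂ` -/
abbrev SSRing (n : ℕ) := MvPolynomial (Fin n ⊕ Fin n) ℂ

/-- the power series `1/∏_{i=1}^{k}(1 - cᵢ t)` (inverse computed via `invOfUnit`) -/
def denomInv (R : Type*) [CommRing R] (c : ℕ → R) (k : ℕ) : PowerSeries R :=
  PowerSeries.invOfUnit (∏ i ∈ Finset.range k, (1 - PowerSeries.C (R := R) (c i) * PowerSeries.X)) 1

/-- the power series `∏_{i=1}^{n} (1 + yᵢ t)/(1 - xᵢ t)` -/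
def hGenSeries (n : ℕ) : PowerSeries (SSRing n) :=
  (∏ i : Fin n, (1 + PowerSeries.C (R := SSRing n) (MvPolynomial.X (Sum.inr i)) * PowerSeries.X)) *
    PowerSeries.invOfUnit
      (∏ i : Fin n, (1 - PowerSeries.C (R := SSRing n) (MvPolynomial.X (Sum.inl i)) * PowerSeries.X)) 1

/-- `h` is the family of multiparameter complete homogeneous supersymmetric polynomials:
`h a k = h_{k;a}(x₁,…,xₙ;y₁,…,yₙ)`, characterized by `h_{k;a} = 0` for `k < 0`, `h_{0;a} = 1`, and
`∏_{i=1}^n (1+yᵢt)/(1-xᵢt) = ∑_{k≥0} h_{k;a} tᵏ/∏_{i=1}^k (1-aᵢt)` (an identity of formal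
power series in `t`, stated coefficientwise). -/
def IsH (n : ℕ) (h : (ℤ → ℂ) → ℤ → SSRing n) : Prop :=
  (∀ (a : ℤ → ℂ) (k : ℤ), k < 0 → h a k = 0) ∧ (∀ a, h a 0 = 1) ∧
  ∀ a : ℤ → ℂ, hGenSeries n = PowerSeries.mk (fun N =>
    ∑ k ∈ Finset.range (N + 1),
      h a k * PowerSeries.coeff (R := SSRing n) (N - k)
        (denomInv (SSRing n) (fun i => MvPolynomial.C (a ((i : ℤ) + 1))) k))

/-- shift of a parameter sequence: `(τʳ a)ᵢ = a_{i+r}` -/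
def tauSeq (a : ℤ → ℂ) (r : ℤ) : ℤ → ℂ := fun i => a (i + r)

/-- dual sequence `âᵢ = -a_{-i+1}` -/
def adual (a : ℤ → ℂ) : ℤ → ℂ := fun i => -a (1 - i)

/-- the multiparameter Schur polynomial `s_{μ;a} = det[h_{μᵢ-i+j; τ^{1-j}a}]_{1≤i,j≤ℓ(μ)}` -/
def schurDet {n : ℕ} (h : (ℤ → ℂ) → ℤ → SSRing n) (a : ℤ → ℂ) (μ : ℕ → ℕ) : SSRing n :=
  Matrix.det (Matrix.of fun i j : Fin (plen μ) =>
    h (tauSeq a (-(j : ℕ) : ℤ)) ((μ (i : ℕ) : ℤ) - (i : ℕ) + (j : ℕ)))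

/-- the Frobenius-Schur sequence `aᵢ = i - 1/2` -/
def aFS : ℤ → ℂ := fun i => (i : ℂ) - 1/2

/-!
Expanding the generating function `∏ (1 + yᵢt)/(1 - xᵢt)` in the basis `tᵏ/∏_{i ≤ k}(1 - aᵢt)`
for the shifted sequence `τ⁻¹a` and comparing with the basis for `a` gives
`h_{m;τ⁻¹a} = h_{m;a} + (a_{m-1} - a₀) h_{m-1;a}`. Expanding the hook determinant of
`(p|q+1)` along its first column (whose entries are `h_{p+1;a}`, `1`, `0`, …) gives
`s_{(p|q+1);a} = h_{p+1;a} s_{(0|q);τ⁻¹a} - s_{(p+1|q);τ⁻¹a}`. With these two rules the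
identity follows by induction on `q`, for all `p` and `a` simultaneously.
-/

section NewtonSeries

open PowerSeries

variable {R : Type*} [CommRing R]

theorem prod_mul_denomInv (c : ℕ → R) (k : ℕ) :
    (∏ i ∈ range k, (1 - C (c i) * X)) * denomInv R c k = 1 :=
  mul_invOfUnit _ _ (by simp)

theorem constantCoeff_denomInv (c : ℕ → R) (k : ℕ) : constantCoeff (denomInv R c k) = 1 := by
  simp [denomInv, constantCoeff_invOfUnit]

theorem denomInv_shift (c : ℕ → R) (k : ℕ) :
    denomInv R (fun i => c (i + 1)) k =
      denomInv R c k + C (c k - c 0) * X * denomInv R c (k + 1) := by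
  have hP := prod_mul_denomInv c (k + 1)
  refine (IsUnit.of_mul_eq_one _ hP).mul_left_cancel ?_
  calc (∏ i ∈ range (k + 1), (1 - C (c i) * X)) * denomInv R (fun i => c (i + 1)) k
      = (1 - C (c 0) * X) * ((∏ i ∈ range k, (1 - C (c (i + 1)) * X)) *
          denomInv R (fun i => c (i + 1)) k) := by rw [prod_range_succ']; ring
    _ = (1 - C (c k) * X) * ((∏ i ∈ range k, (1 - C (c i) * X)) * denomInv R c k) +
          C (c k - c 0) * X *
            ((∏ i ∈ range (k + 1), (1 - C (c i) * X)) * denomInv R c (k + 1)) := by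
        rw [prod_mul_denomInv, prod_mul_denomInv, prod_mul_denomInv, map_sub]; ring
    _ = _ := by rw [prod_range_succ]; ring

/-- The power series `∑ₖ gₖ tᵏ / ∏_{i<k} (1 - cᵢ t)`. -/
def newtonSeries (c g : ℕ → R) : R⟦X⟧ :=
  PowerSeries.mk fun N => ∑ k ∈ range (N + 1), g k * coeff (N - k) (denomInv R c k)

theorem newtonSeries_injective (c : ℕ → R) : Function.Injective (newtonSeries c) := by
  intro g₁ g₂ heq
  funext N
  induction N using Nat.strong_induction_on with
  | _ N ih =>
    have hN := congrArg (coeff N) heq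
    simp only [newtonSeries, coeff_mk, sum_range_succ, Nat.sub_self,
      coeff_zero_eq_constantCoeff_apply, constantCoeff_denomInv, mul_one] at hN
    rwa [sum_congr rfl fun k hk => by rw [ih k (mem_range.mp hk)], add_right_inj] at hN

/-- The `k = 0` correction term is `(c 0 - c 0) * g 0 = 0`, since `0 - 1 = 0` in `ℕ`. -/
theorem newtonSeries_shift (c g : ℕ → R) :
    newtonSeries (fun i => c (i + 1)) g =
      newtonSeries c fun k => g k + (c (k - 1) - c 0) * g (k - 1) := by
  ext N
  simp only [newtonSeries, coeff_mk, denomInv_shift, map_add, mul_add, add_mul, sum_add_distrib]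
  congr 1
  rw [sum_range_succ, sum_range_succ', Nat.sub_self, coeff_zero_eq_constantCoeff_apply]
  simp only [map_mul, constantCoeff_X, mul_zero, zero_mul, add_zero, Nat.zero_sub, sub_self]
  refine sum_congr rfl fun k hk => ?_
  obtain ⟨j, hj⟩ : ∃ j, N - k = j + 1 := ⟨N - k - 1, by have := mem_range.mp hk; omega⟩
  rw [hj, mul_assoc, coeff_C_mul, coeff_succ_X_mul, Nat.add_sub_cancel,
    show N - (k + 1) = j by omega]
  ring

end NewtonSeries

@[simp]
theorem tauSeq_zero (a : ℤ → ℂ) : tauSeq a 0 = a := by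
  funext i; simp [tauSeq]

theorem tauSeq_tauSeq (a : ℤ → ℂ) (r s : ℤ) : tauSeq (tauSeq a r) s = tauSeq a (s + r) := by
  funext i; simp [tauSeq, add_assoc]

section HookDeterminants

variable {n : ℕ} (h : (ℤ → ℂ) → ℤ → SSRing n)

def schurMatrix (a : ℤ → ℂ) (μ : ℕ → ℕ) (m : ℕ) : Matrix (Fin m) (Fin m) (SSRing n) :=
  Matrix.of fun i j => h (tauSeq a (-(j : ℕ) : ℤ)) ((μ i : ℤ) - (i : ℕ) + (j : ℕ))

theorem schurDet_eq_det_schurMatrix (a : ℤ → ℂ) {μ : ℕ → ℕ} {m : ℕ} (hμ : plen μ = m) :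
    schurDet h a μ = (schurMatrix h a μ m).det := by
  subst hμ; rfl

theorem schurMatrix_apply_zero (a : ℤ → ℂ) (μ : ℕ → ℕ) (m : ℕ) (i : Fin (m + 1)) :
    schurMatrix h a μ (m + 1) i 0 = h a ((μ i : ℤ) - (i : ℕ)) := by
  simp [schurMatrix]

theorem submatrix_succ_schurMatrix (a : ℤ → ℂ) {μ ν : ℕ → ℕ} {m : ℕ}
    (f : Fin m → Fin (m + 1))
    (hf : ∀ i, (μ (f i) : ℤ) - (f i : ℕ) + 1 = (ν i : ℤ) - (i : ℕ)) :
    (schurMatrix h a μ (m + 1)).submatrix f Fin.succ = schurMatrix h (tauSeq a (-1)) ν m := by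
  refine Matrix.ext fun i j => ?_
  simp only [schurMatrix, Matrix.submatrix_apply, Matrix.of_apply, Fin.val_succ, tauSeq_tauSeq]
  congr 1
  · congr 1; push_cast; ring
  · push_cast; linear_combination hf i

theorem hookP_zero (p q : ℕ) : hookP p q 0 = p + 1 := rfl

theorem hookP_succ (p q i : ℕ) : hookP p q (i + 1) = if i < q then 1 else 0 := by
  simp only [hookP, Nat.add_one_ne_zero, if_false]
  split_ifs <;> omega

theorem plen_hookP (p q : ℕ) : plen (hookP p q) = q + 1 := by
  have hpos : ∀ i, 0 < hookP p q i ↔ i < q + 1 := by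
    intro i; unfold hookP; split_ifs <;> omega
  rw [plen, Nat.card_congr ((Equiv.subtypeEquivRight hpos).trans Fin.equivSubtype.symm),
    Nat.card_eq_fintype_card, Fintype.card_fin]

theorem schurDet_hookP_zero_right (a : ℤ → ℂ) (p : ℕ) :
    schurDet h a (hookP p 0) = h a ((p : ℤ) + 1) := by
  rw [schurDet_eq_det_schurMatrix h a (plen_hookP p 0), Matrix.det_fin_one,
    schurMatrix_apply_zero]
  simp [hookP]

theorem schurDet_hookP_succ_right (a : ℤ → ℂ) (hneg : ∀ k < 0, h a k = 0) (h0 : h a 0 = 1)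
    (p q : ℕ) :
    schurDet h a (hookP p (q + 1)) =
      h a ((p : ℤ) + 1) * schurDet h (tauSeq a (-1)) (hookP 0 q) -
        schurDet h (tauSeq a (-1)) (hookP (p + 1) q) := by
  rw [schurDet_eq_det_schurMatrix h a (plen_hookP p (q + 1)),
    schurDet_eq_det_schurMatrix h _ (plen_hookP 0 q),
    schurDet_eq_det_schurMatrix h _ (plen_hookP (p + 1) q),
    Matrix.det_succ_column_zero, Fin.sum_univ_succ, Fin.sum_univ_succ, Fin.succAbove_zero,
    Fin.succ_zero_eq_one, submatrix_succ_schurMatrix h a (ν := hookP 0 q) Fin.succ ?row0,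
    submatrix_succ_schurMatrix h a (ν := hookP (p + 1) q) (Fin.succAbove 1) ?row1]
  case row0 =>
    intro i
    have := i.isLt
    simp only [Fin.val_succ, hookP, Nat.add_one_ne_zero, if_false]
    split_ifs <;> omega
  case row1 =>
    intro i
    cases i using Fin.cases with
    | zero => simp [hookP_zero]
    | succ i =>
      have := i.isLt
      simp only [Fin.one_succAbove_succ, Fin.val_succ, hookP, Nat.add_one_ne_zero, if_false]
      split_ifs <;> omega
  have hcol : ∀ i : Fin q, schurMatrix h a (hookP p (q + 1)) (q + 1 + 1) i.succ.succ 0 = 0 := by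
    intro i
    have := i.isLt
    rw [schurMatrix_apply_zero, Fin.val_succ, Fin.val_succ, hookP_succ, if_pos (by omega)]
    exact hneg _ (by push_cast; omega)
  simp [hcol, schurMatrix_apply_zero, hookP_zero, hookP_succ, h0, sub_eq_add_neg]

end HookDeterminants

section CompleteHomogeneous

variable {n : ℕ} {h : (ℤ → ℂ) → ℤ → SSRing n}

theorem IsH.apply_tauSeq_neg_one (hh : IsH n h) (a : ℤ → ℂ) (m : ℤ) :
    h (tauSeq a (-1)) m = h a m + MvPolynomial.C (a (m - 1) - a 0) * h a (m - 1) := by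
  obtain ⟨hneg, -, hgen⟩ := hh
  set c : ℕ → SSRing n := fun i => MvPolynomial.C (a i)
  have hc : (fun i : ℕ => MvPolynomial.C (tauSeq a (-1) (i + 1))) = c := by
    funext i; simp [c, tauSeq]
  have key : (fun k : ℕ => h (tauSeq a (-1)) k) =
      fun k : ℕ => h a k + (c (k - 1) - c 0) * h a ↑(k - 1) := by
    refine newtonSeries_injective c ?_
    rw [← newtonSeries_shift]
    have hb := hgen (tauSeq a (-1))
    rw [hc] at hb
    exact hb.symm.trans (hgen a)
  rcases lt_or_ge m 0 with hm | hm
  · rw [hneg _ _ hm, hneg _ _ hm, hneg _ _ (by omega), mul_zero, add_zero]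
  obtain ⟨k, rfl⟩ := Int.eq_ofNat_of_zero_le hm
  rcases k with _ | k
  · simpa [c, hneg a (-1) (by norm_num)] using congrFun key 0
  · simpa [c] using congrFun key (k + 1)

theorem IsH.hook_relation (hh : IsH n h) (p q : ℕ) (a : ℤ → ℂ) :
    schurDet h a (hookP (p + 1) q) + schurDet h a (hookP p (q + 1)) +
        MvPolynomial.C (a ((p : ℤ) + 1) - a (-(q : ℤ))) * schurDet h a (hookP p q) =
      h a ((p : ℤ) + 1) * schurDet h a (hookP 0 q) := by
  have hexpand := fun a => schurDet_hookP_succ_right h a (hh.1 a) (hh.2.1 a)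
  induction q generalizing p a with
  | zero =>
    have hshift₁ : h (tauSeq a (-1)) 1 = h a 1 := by simpa using hh.apply_tauSeq_neg_one a 1
    have hshift₂ := hh.apply_tauSeq_neg_one a ((p : ℤ) + 2)
    simp only [hexpand, schurDet_hookP_zero_right, map_sub] at hshift₂ ⊢
    push_cast at hshift₂ ⊢
    linear_combination (norm := ring_nf) h a ((p : ℤ) + 1) * hshift₁ - hshift₂
  | succ q ih =>
    have ih₁ := ih (p + 1) (tauSeq a (-1))
    have ih₂ := ih 0 (tauSeq a (-1))
    have hshift₁ : h (tauSeq a (-1)) 1 = h a 1 := by simpa using hh.apply_tauSeq_neg_one a 1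
    have hshift₂ := hh.apply_tauSeq_neg_one a ((p : ℤ) + 2)
    rw [hexpand a (p + 1) q, hexpand a p (q + 1), hexpand a p q, hexpand a 0 q]
    simp only [tauSeq, map_sub] at ih₁ ih₂ hshift₂ ⊢
    push_cast at ih₁ ih₂ hshift₂ ⊢
    linear_combination (norm := ring_nf) -ih₁ + h a ((p : ℤ) + 1) * ih₂ -
      schurDet h (tauSeq a (-1)) (hookP 0 q) * hshift₂ +
      h a ((p : ℤ) + 1) * schurDet h (tauSeq a (-1)) (hookP 0 q) * hshift₁

end CompleteHomogeneous

theorem hook_relation_multiparameter_general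
    (p q : ℕ) (a : ℤ → ℂ) (n : ℕ)
    (h : (ℤ → ℂ) → ℤ → SSRing n) (hh : IsH n h) :
    schurDet h a (hookP (p + 1) q) + schurDet h a (hookP p (q + 1)) +
        MvPolynomial.C (a ((p : ℤ) + 1) + adual a ((q : ℤ) + 1)) * schurDet h a (hookP p q) =
      schurDet h a (hookP p 0) * schurDet h a (hookP 0 q) := by
  have hâ : adual a ((q : ℤ) + 1) = -a (-(q : ℤ)) := by simp [adual]
  rw [hâ, ← sub_eq_add_neg, schurDet_hookP_zero_right]
  exact hh.hook_relation p q a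

/-- For all `p, q ≥ 0`, every parameter sequence `a` and every `n ≥ 1`:
`s_{(p+1|q);a} + s_{(p|q+1);a} + (a_{p+1} + â_{q+1})·s_{(p|q);a} = s_{(p|0);a}·s_{(0|q);a}`
as polynomials in `(x₁,…,xₙ;y₁,…,yₙ)`. -/
theorem hook_relation_multiparameter
    (p q : ℕ) (a : ℤ → ℂ) (n : ℕ) (hn : 1 ≤ n)
    (h : (ℤ → ℂ) → ℤ → SSRing n) (hh : IsH n h) :
    schurDet h a (hookP (p + 1) q) + schurDet h a (hookP p (q + 1)) +
        MvPolynomial.C (a ((p : ℤ) + 1) + adual a ((q : ℤ) + 1)) * schurDet h a (hookP p q) =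
      schurDet h a (hookP p 0) * schurDet h a (hookP 0 q) :=
  hook_relation_multiparameter_general p q a n h hh

end
end

section
/- Set e_{k;a} = s_{(1^k);a}, the multiparameter Schur polynomial of the column partition (1,1,…,1) with k parts. Then for every n ≥ 1 the following identity of formal power series in t holds: ∏_{i=1}^{n} (1+xᵢt)/(1−yᵢt) = 1 + Σ_{k≥1} e_{k;a}(x₁,…,xₙ;y₁,…,yₙ) · tᵏ / ∏_{i=1}^{k}(1−âᵢt), where â is the dual sequence. -/
open Finset

noncomputable section

/-- the column partition `(1^k)` -/
def columnP (k : ℕ) : ℕ → ℕ := fun i => if i < k then 1 else 0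

/-!
Write `F = ∏ (1 + yᵢt)/(1 - xᵢt)` and `G = ∏ (1 + xᵢt)/(1 - yᵢt)`. Swapping `x` and `y` turns `F`
into `G`, so the expansion of `F` with respect to `â` becomes an expansion
`G = ∑ eₖ tᵏ / ∏_{i≤k} (1 - âᵢt)`, and it remains to show `s_{(1ᵏ);a} = eₖ`.
Since `G(-t) F(t) = 1`, multiplying the expansions of `F` (for `τ^{1-j} a`) and of `G(-t)` by the
polynomial `∏_{i=2-j}^{0} (1 - aᵢt)` of degree `j - 1` and comparing coefficients of `tʲ` shows that
the vector `((-1)ˡ eₗ)ₗ` is orthogonal to every column `j ≥ 1` of the unitriangular matrix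
`(h_{j-l; τ^{1-j} a})_{l,j}`. Cramer's rule then gives `(-1)ᵏ eₖ = (-1)ᵏ M`, where `M`, the minor of
that matrix without its last row and first column, is exactly the determinant `s_{(1ᵏ);a}`.
-/

open PowerSeries

theorem Matrix.det_submatrix_castSucc_succ_of_vecMul_eq_single {R : Type*} [CommRing R] {k : ℕ}
    (T : Matrix (Fin (k + 1)) (Fin (k + 1)) R) (hT : T.det = 1) {v : Fin (k + 1) → R}
    (hv : Matrix.vecMul v T = Pi.single 0 1) :
    (T.submatrix Fin.castSucc Fin.succ).det = (-1) ^ k * v (Fin.last k) := by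
  have hv' : v = Matrix.vecMul (Pi.single 0 1) T.adjugate := by
    rw [← hv, Matrix.vecMul_vecMul, Matrix.mul_adjugate, hT, one_smul, Matrix.vecMul_one]
  rw [hv', Matrix.single_one_vecMul, Matrix.row_apply, Matrix.adjugate_fin_succ_eq_det_submatrix,
    Fin.succAbove_last, Fin.succAbove_zero, Fin.val_last, Fin.val_zero, add_zero, ← mul_assoc,
    ← pow_add, Even.neg_one_pow ⟨k, rfl⟩, one_mul]

namespace MultiparamSchur

section

variable {R : Type*} [CommRing R]

theorem constantCoeff_prod_one_sub_C_mul_X {ι : Type*} (s : Finset ι) (b : ι → R) :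
    constantCoeff (∏ i ∈ s, (1 - C (b i) * X)) = 1 := by
  simp [map_prod]

theorem coeff_prod_one_sub_C_mul_X_of_card_lt {ι : Type*} (s : Finset ι) (b : ι → R) {m : ℕ}
    (hm : #s < m) : coeff m (∏ i ∈ s, (1 - C (b i) * X)) = 0 := by
  induction s using Finset.cons_induction generalizing m with
  | empty => rw [prod_empty, coeff_one, if_neg (by rw [card_empty] at hm; omega)]
  | cons i s hi ih =>
    obtain ⟨m, rfl⟩ : ∃ m', m = m' + 1 := ⟨m - 1, by rw [card_cons] at hm; omega⟩
    rw [card_cons] at hm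
    rw [prod_cons, sub_mul, one_mul, mul_assoc, map_sub, coeff_C_mul, coeff_succ_X_mul,
      ih (by omega), ih (by omega), mul_zero, sub_zero]

theorem prod_mul_denomInv (b : ℕ → R) (k : ℕ) :
    (∏ i ∈ range k, (1 - C (b i) * X)) * denomInv R b k = 1 :=
  mul_invOfUnit _ 1 (by rw [constantCoeff_prod_one_sub_C_mul_X]; rfl)

theorem constantCoeff_denomInv (b : ℕ → R) (k : ℕ) : constantCoeff (denomInv R b k) = 1 := by
  rw [denomInv, constantCoeff_invOfUnit]; rfl

theorem invOfUnit_one_eq_of_mul_eq_one {φ ψ : R⟦X⟧} (hφ : constantCoeff φ = 1)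
    (h : φ * ψ = 1) : invOfUnit φ 1 = ψ :=
  left_inv_eq_right_inv (invOfUnit_mul φ 1 (by rw [hφ]; rfl)) h

theorem map_invOfUnit_one {S : Type*} [CommRing S] (Ψ : R⟦X⟧ →+* S⟦X⟧) {φ : R⟦X⟧}
    (hφ : constantCoeff φ = 1) (hΨφ : constantCoeff (Ψ φ) = 1) :
    Ψ (invOfUnit φ 1) = invOfUnit (Ψ φ) 1 :=
  (invOfUnit_one_eq_of_mul_eq_one hΨφ (by
    rw [← map_mul, mul_invOfUnit φ 1 (by rw [hφ]; rfl), map_one])).symm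

theorem denomInv_eq_of_mul_eq_one {b : ℕ → R} {k : ℕ} {g : R⟦X⟧}
    (hg : (∏ i ∈ range k, (1 - C (b i) * X)) * g = 1) : denomInv R b k = g :=
  invOfUnit_one_eq_of_mul_eq_one (constantCoeff_prod_one_sub_C_mul_X _ _) hg

theorem map_denomInv {S : Type*} [CommRing S] (f : R →+* S) (b : ℕ → R) (k : ℕ) :
    map f (denomInv R b k) = denomInv S (f ∘ b) k := by
  refine (denomInv_eq_of_mul_eq_one ?_).symm
  simpa [map_prod] using congrArg (map f) (prod_mul_denomInv b k)

theorem rescale_one_sub_C_mul_X (r c : R) : rescale r (1 - C c * X) = 1 - C (r * c) * X := by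
  ext (_ | _ | n) <;> simp only [coeff_rescale, map_sub, coeff_one, coeff_C_mul, coeff_X] <;> simp

theorem rescale_one_add_C_mul_X (r c : R) : rescale r (1 + C c * X) = 1 + C (r * c) * X := by
  simpa [sub_eq_add_neg] using rescale_one_sub_C_mul_X r (-c)

theorem rescale_denomInv (r : R) (b : ℕ → R) (k : ℕ) :
    rescale r (denomInv R b k) = denomInv R (fun i => r * b i) k := by
  refine (denomInv_eq_of_mul_eq_one ?_).symm
  simpa [map_prod, rescale_one_sub_C_mul_X] using congrArg (rescale r) (prod_mul_denomInv b k)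

theorem prod_range_neg_eq_mul_mul {M : Type*} [CommMonoid M] (φ : ℤ → M) {j k l : ℕ}
    (h : k + l < j) :
    ∏ i ∈ range (j - 1), φ (-i) =
      (∏ i ∈ range l, φ (-i)) * (∏ i ∈ Ico l (j - 1 - k), φ (-i)) *
        ∏ i ∈ range k, φ (i + 2 - j) := by
  have hreflect : ∏ i ∈ range k, φ (i + 2 - j) = ∏ i ∈ Ico (j - 1 - k) (j - 1), φ (-i) := by
    rw [prod_Ico_eq_prod_range, show j - 1 - (j - 1 - k) = k by omega, ← prod_range_reflect]
    refine prod_congr rfl fun i hi => congrArg φ ?_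
    rw [mem_range] at hi
    omega
  rw [prod_range_mul_prod_Ico _ (by omega), hreflect, prod_range_mul_prod_Ico _ (by omega)]

/-- `Φ = ∑ₖ c k · Xᵏ / ∏_{i<k} (1 - b i · X)`, read coefficientwise as in `IsH`. -/
def IsNewtonExpansion (Φ : R⟦X⟧) (c b : ℕ → R) : Prop :=
  ∀ N, coeff N Φ = ∑ k ∈ range (N + 1), c k * coeff (N - k) (denomInv R b k)

theorem isNewtonExpansion_iff_eq_mk {Φ : R⟦X⟧} {c b : ℕ → R} :
    IsNewtonExpansion Φ c b ↔
      Φ = mk fun N => ∑ k ∈ range (N + 1), c k * coeff (N - k) (denomInv R b k) :=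
  ⟨fun h => ext fun N => by rw [coeff_mk, h N], fun h N => by rw [h, coeff_mk]⟩

namespace IsNewtonExpansion

variable {Φ : R⟦X⟧} {c b : ℕ → R}

theorem map {S : Type*} [CommRing S] (hΦ : IsNewtonExpansion Φ c b) (f : R →+* S) :
    IsNewtonExpansion (PowerSeries.map f Φ) (f ∘ c) (f ∘ b) := by
  intro N
  simp only [coeff_map, hΦ N, map_sum, map_mul, Function.comp_apply, ← map_denomInv]

theorem rescale (hΦ : IsNewtonExpansion Φ c b) (r : R) :
    IsNewtonExpansion (PowerSeries.rescale r Φ) (fun k => r ^ k * c k) (fun i => r * b i) := by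
  intro N
  rw [coeff_rescale, hΦ N, mul_sum]
  refine sum_congr rfl fun k hk => ?_
  rw [← rescale_denomInv, coeff_rescale,
    ← Nat.add_sub_of_le (Nat.le_of_lt_succ (mem_range.1 hk)), pow_add, Nat.add_sub_cancel_left]
  ring

theorem X_pow_dvd_sub (hΦ : IsNewtonExpansion Φ c b) (j : ℕ) :
    X ^ (j + 1) ∣ Φ - ∑ k ∈ range (j + 1), C (c k) * (X ^ k * denomInv R b k) := by
  refine X_pow_dvd_iff.2 fun m hm => ?_
  simp only [map_sub, map_sum, coeff_C_mul, coeff_X_pow_mul', hΦ m]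
  rw [sub_eq_zero, ← sum_subset (range_subset_range.2 hm) fun k _ hk => ?_]
  · exact sum_congr rfl fun k hk => by rw [if_pos (Nat.le_of_lt_succ (mem_range.1 hk))]
  · rw [if_neg (by simpa using hk), mul_zero]

end IsNewtonExpansion

theorem coeff_X_pow_mul_prod_mul_denomInv_mul_denomInv (γ : ℤ → R) (j k l : ℕ) :
    coeff j (X ^ (k + l) * ((∏ i ∈ range (j - 1), (1 - C (γ (-i)) * X)) *
      denomInv R (fun i => γ (i + 2 - j)) k * denomInv R (fun i => γ (-i)) l)) =
      if k + l = j then 1 else 0 := by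
  rw [coeff_X_pow_mul']
  rcases lt_trichotomy (k + l) j with hlt | heq | hgt
  · rw [if_pos hlt.le, if_neg hlt.ne, prod_range_neg_eq_mul_mul (fun i => 1 - C (γ i) * X) hlt]
    have hcancel : ∀ {p q r s t : R⟦X⟧}, r * s = 1 → p * t = 1 → p * q * r * s * t = q :=
      fun {p q r s t} hrs hpt => by linear_combination (q * p * t) * hrs + q * hpt
    rw [hcancel (prod_mul_denomInv _ k) (prod_mul_denomInv _ l),
      coeff_prod_one_sub_C_mul_X_of_card_lt _ _ (by rw [Nat.card_Ico]; omega)]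
  · subst heq
    simp [coeff_zero_eq_constantCoeff_apply, constantCoeff_denomInv]
  · rw [if_neg (by omega), if_neg hgt.ne']

theorem IsNewtonExpansion.sum_mul_eq_zero {F G : R⟦X⟧} (hFG : F * G = 1) {γ : ℤ → R}
    {f g : ℕ → R} {j : ℕ} (hj : 1 ≤ j) (hF : IsNewtonExpansion F f fun i => γ (i + 2 - j))
    (hG : IsNewtonExpansion G g fun i => γ (-i)) :
    ∑ l ∈ range (j + 1), g l * f (j - l) = 0 := by
  set Q : R⟦X⟧ := ∏ i ∈ range (j - 1), (1 - C (γ (-i)) * X)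
  set A := ∑ k ∈ range (j + 1), C (f k) * (X ^ k * denomInv R (fun i => γ (i + 2 - j)) k)
  set B := ∑ l ∈ range (j + 1), C (g l) * (X ^ l * denomInv R (fun i => γ (-i)) l)
  have hQAB : coeff j (Q * (A * B)) = 0 := by
    have hdvd : X ^ (j + 1) ∣ Q * ((F - A) * G + A * (G - B)) :=
      dvd_mul_of_dvd_right (dvd_add (dvd_mul_of_dvd_left (hF.X_pow_dvd_sub j) _)
        (dvd_mul_of_dvd_right (hG.X_pow_dvd_sub j) _)) _
    have hQ : coeff j Q = 0 := coeff_prod_one_sub_C_mul_X_of_card_lt _ _ (by simp; omega)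
    rw [show Q * (A * B) = Q * (F * G) - Q * ((F - A) * G + A * (G - B)) by ring, hFG, mul_one,
      map_sub, hQ, X_pow_dvd_iff.1 hdvd j (by omega), sub_zero]
  have hexpand : coeff j (Q * (A * B)) = ∑ l ∈ range (j + 1), ∑ k ∈ range (j + 1),
      f k * g l * if k + l = j then 1 else 0 := by
    simp only [A, B, sum_mul, mul_sum, map_sum]
    refine sum_congr rfl fun l _ => sum_congr rfl fun k _ => ?_
    rw [← coeff_X_pow_mul_prod_mul_denomInv_mul_denomInv γ, ← coeff_C_mul]
    congr 1
    rw [map_mul, pow_add]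
    ring
  rw [← hQAB, hexpand]
  refine sum_congr rfl fun l hl => ?_
  rw [mem_range] at hl
  rw [sum_eq_single_of_mem (j - l) (mem_range.2 (by omega)) fun k _ hk => by
    rw [if_neg (by omega), mul_zero], if_pos (by omega), mul_one, mul_comm]

end

def eGenSeries (n : ℕ) : PowerSeries (SSRing n) :=
  (∏ i : Fin n, (1 + C (MvPolynomial.X (Sum.inl i)) * X)) *
    invOfUnit (∏ i : Fin n, (1 - C (MvPolynomial.X (Sum.inr i)) * X)) 1

theorem map_rename_swap_hGenSeries (n : ℕ) :
    PowerSeries.map (MvPolynomial.rename Sum.swap).toRingHom (hGenSeries n) = eGenSeries n := by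
  rw [hGenSeries, eGenSeries, map_mul,
    map_invOfUnit_one _ (constantCoeff_prod_one_sub_C_mul_X _ _) (by simp [map_prod])]
  simp [map_prod]

theorem hGenSeries_mul_rescale_neg_one_eGenSeries (n : ℕ) :
    hGenSeries n * rescale (-1) (eGenSeries n) = 1 := by
  rw [hGenSeries, eGenSeries, map_mul,
    map_invOfUnit_one _ (constantCoeff_prod_one_sub_C_mul_X _ _) (by simp [map_prod])]
  simp only [map_prod, rescale_one_sub_C_mul_X, rescale_one_add_C_mul_X, map_neg, neg_mul,
    one_mul, ← sub_eq_add_neg, sub_neg_eq_add]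
  set A : PowerSeries (SSRing n) := ∏ i : Fin n, (1 - C (MvPolynomial.X (Sum.inl i)) * X)
  set B : PowerSeries (SSRing n) := ∏ i : Fin n, (1 + C (MvPolynomial.X (Sum.inr i)) * X)
  have hA : A * invOfUnit A 1 = 1 := mul_invOfUnit _ _ (by simp [A, map_prod])
  have hB : B * invOfUnit B 1 = 1 := mul_invOfUnit _ _ (by simp [B, map_prod])
  linear_combination (A * invOfUnit A 1) * hB + hA

theorem plen_columnP (k : ℕ) : plen (columnP k) = k :=
  Nat.card_eq_of_equiv_fin
    ((Equiv.subtypeEquivRight fun i => by by_cases hi : i < k <;> simp [columnP, hi]).trans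
      Fin.equivSubtype.symm)

theorem schurDet_columnP {n : ℕ} {h : (ℤ → ℂ) → ℤ → SSRing n}
    (hneg : ∀ (a : ℤ → ℂ) (k : ℤ), k < 0 → h a k = 0) (hzero : ∀ a, h a 0 = 1) (a : ℤ → ℂ)
    {v : ℕ → SSRing n} (hv0 : v 0 = 1)
    (hv : ∀ j, 1 ≤ j → ∑ l ∈ range (j + 1), v l * h (tauSeq a (1 - j)) (j - l : ℕ) = 0)
    (k : ℕ) : schurDet h a (columnP k) = (-1) ^ k * v k := by
  set T : Matrix (Fin (k + 1)) (Fin (k + 1)) (SSRing n) :=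
    Matrix.of fun i j => h (tauSeq a (1 - (j : ℕ))) ((j : ℕ) - (i : ℕ))
  have hT : T.det = 1 := by
    rw [Matrix.det_of_isUpperTriangular (M := T) fun i j hij => hneg _ _ (by
      have := Fin.lt_def.1 hij; simp only [id] at this ⊢; omega)]
    exact prod_eq_one fun i _ => by simp [T, hzero]
  have hvT : Matrix.vecMul (fun l : Fin (k + 1) => v l) T = Pi.single 0 1 := by
    funext j
    have htrunc : Matrix.vecMul (fun l : Fin (k + 1) => v l) T j =
        ∑ l ∈ range (j + 1), v l * h (tauSeq a (1 - (j : ℕ))) ((j - l : ℕ) : ℤ) := by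
      simp only [Matrix.vecMul, dotProduct, T, Matrix.of_apply]
      rw [Fin.sum_univ_eq_sum_range
        (fun l => v l * h (tauSeq a (1 - (j : ℕ))) ((j : ℕ) - l)) (k + 1),
        ← sum_subset (range_subset_range.2 j.isLt) fun l _ hl => by
          rw [hneg _ _ (by simp at hl; omega), mul_zero]]
      exact sum_congr rfl fun l hl => by rw [Nat.cast_sub (by simp at hl; omega)]
    rw [htrunc]
    cases j using Fin.cases with
    | zero => simp [hv0, hzero]
    | succ j => rw [Pi.single_eq_of_ne (Fin.succ_ne_zero j), Fin.val_succ, hv _ (by omega)]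
  have hschur : schurDet h a (columnP k) = (T.submatrix Fin.castSucc Fin.succ).det := by
    rw [schurDet, ← Matrix.det_reindex_self (finCongr (plen_columnP k))]
    congr 1
    refine Matrix.ext fun i j => ?_
    simp [T, columnP, add_comm, add_sub_assoc]
  rw [hschur, Matrix.det_submatrix_castSucc_succ_of_vecMul_eq_single T hT hvT, Fin.val_last]

end MultiparamSchur

open MultiparamSchur

theorem e_generating_series_general
    (a : ℤ → ℂ) (n : ℕ)
    (h : (ℤ → ℂ) → ℤ → SSRing n) (hh : IsH n h) :
    (∏ i : Fin n,
        (1 + PowerSeries.C (R := SSRing n) (MvPolynomial.X (Sum.inl i)) * PowerSeries.X)) *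
      PowerSeries.invOfUnit
        (∏ i : Fin n,
          (1 - PowerSeries.C (R := SSRing n) (MvPolynomial.X (Sum.inr i)) * PowerSeries.X)) 1 =
    PowerSeries.mk (fun N =>
      ∑ k ∈ Finset.range (N + 1),
        schurDet h a (columnP k) *
          PowerSeries.coeff (R := SSRing n) (N - k)
            (denomInv (SSRing n) (fun i => MvPolynomial.C (adual a ((i : ℤ) + 1))) k)) := by
  obtain ⟨hneg, hzero, hexp⟩ := hh
  have hF (b : ℤ → ℂ) :
      IsNewtonExpansion (hGenSeries n) (fun k => h b k) fun i => MvPolynomial.C (b (i + 1)) :=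
    isNewtonExpansion_iff_eq_mk.2 (hexp b)
  set e : ℕ → SSRing n := fun k => MvPolynomial.rename Sum.swap (h (adual a) k)
  have hG : IsNewtonExpansion (eGenSeries n) e fun i => MvPolynomial.C (adual a (i + 1)) := by
    have := (hF (adual a)).map (MvPolynomial.rename Sum.swap).toRingHom
    rw [map_rename_swap_hGenSeries] at this
    convert this using 1 <;> funext i <;> simp [e]
  have he (k : ℕ) : schurDet h a (columnP k) = e k := by
    rw [schurDet_columnP hneg hzero a (v := fun l => (-1) ^ l * e l) (by simp [e, hzero])
      (fun j hj => ?_) k, ← mul_assoc, ← pow_add, Even.neg_one_pow ⟨k, rfl⟩, one_mul]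
    refine IsNewtonExpansion.sum_mul_eq_zero (hGenSeries_mul_rescale_neg_one_eGenSeries n) hj
      (γ := fun i => MvPolynomial.C (a i)) (f := fun m => h (tauSeq a (1 - j)) m)
      (g := fun l => (-1) ^ l * e l) ?_ ?_
    · convert hF (tauSeq a (1 - j)) using 3
      simp only [tauSeq]
      ring_nf
    · convert hG.rescale (-1) using 3
      simp [adual]
  simp only [he]
  exact isNewtonExpansion_iff_eq_mk.1 hG

/-- With `e_{k;a} = s_{(1^k);a}`, for every `n ≥ 1` the identity of formal
power series in `t`:
`∏_{i=1}^{n} (1+xᵢt)/(1-yᵢt) = 1 + ∑_{k≥1} e_{k;a}(x;y)·tᵏ/∏_{i=1}^{k}(1-âᵢt)`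
(stated coefficientwise, the `k = 0` term of the right-hand side being `1`). -/
theorem e_generating_series
    (a : ℤ → ℂ) (n : ℕ) (hn : 1 ≤ n)
    (h : (ℤ → ℂ) → ℤ → SSRing n) (hh : IsH n h) :
    (∏ i : Fin n,
        (1 + PowerSeries.C (R := SSRing n) (MvPolynomial.X (Sum.inl i)) * PowerSeries.X)) *
      PowerSeries.invOfUnit
        (∏ i : Fin n,
          (1 - PowerSeries.C (R := SSRing n) (MvPolynomial.X (Sum.inr i)) * PowerSeries.X)) 1 =
    PowerSeries.mk (fun N =>
      ∑ k ∈ Finset.range (N + 1),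
        schurDet h a (columnP k) *
          PowerSeries.coeff (R := SSRing n) (N - k)
            (denomInv (SSRing n) (fun i => MvPolynomial.C (adual a ((i : ℤ) + 1))) k)) :=
  e_generating_series_general a n h hh

end
end

section
/- Let μ = (p₁,…,p_d | q₁,…,q_d) be a partition in Frobenius coordinates and a = (aᵢ)_{i∈ℤ} any sequence of complex numbers with dual sequence â. Then: ∏_{(i,j)∈μ} (a_{μᵢ−i+1} − a_{j−μ'ⱼ}) · ∏_{1≤i<k≤d} (a_{pᵢ+1} − a_{p_k+1})(â_{qᵢ+1} − â_{q_k+1}) = ∏_{i=1}^{d} [ ∏_{t=1}^{pᵢ}(a_{pᵢ+1} − a_t) · ∏_{t=1}^{qᵢ}(â_{qᵢ+1} − â_t) ] · ∏_{i=1}^{d} ∏_{j=1}^{d} (a_{pᵢ+1} + â_{qⱼ+1}). -/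
open Finset

noncomputable section

/-!
Write `αᵢ = μᵢ - i` and `βⱼ = j + 1 - μ'ⱼ` (the particles and holes of the Maya diagram of `μ`).
The box `(i, j)` contributes `a_{αᵢ} - a_{βⱼ}`, and `a_{pᵢ+1} = a_{αᵢ}`, `â_{qⱼ+1} = -a_{βⱼ}`.
Split the boxes into the `d × d` Durfee square, which gives the last product on the right, the
arms of the rows `i < d` and the legs of the columns `j < d`. For a row `i < d`, the particles
`αₖ` (`i < k < d`) together with the holes `βⱼ` of its arm are exactly the integers
`1, …, pᵢ`, so the arm and the first Vandermonde factors of that row give `∏ₜ (a_{pᵢ+1} - aₜ)`.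
The columns are the same statement for `μ'`, whose particles and holes are `1 - βⱼ` and `1 - αᵢ`;
this reflection is where the dual sequence `â` comes from.
-/

lemma Nat.lt_card_iff_of_isLowerSet {S : Set ℕ} (hS : IsLowerSet S) (hfin : S.Finite) {i : ℕ} :
    i < Nat.card S ↔ i ∈ S := by
  obtain rfl | ⟨m, rfl⟩ := hS.eq_univ_or_Iio
  · exact absurd hfin Set.infinite_univ
  · simp

lemma Int.prod_Ioo_zero_natCast_add_one {M : Type*} [CommMonoid M] (n : ℕ) (f : ℤ → M) :
    ∏ x ∈ Ioo (0 : ℤ) (n + 1), f x = ∏ t ∈ Finset.range n, f ((t : ℤ) + 1) := by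
  rw [Int.Ioo_eq_finset_map, prod_map]
  simp [add_comm]

/- The Maya diagram of `μ` (0-indexed): `ℤ` is the disjoint union of the particles `μᵢ - i` and
the holes `j + 1 - μ'ⱼ`, and the box `(i, j)` of `μ` has hook length `particle μ i - hole μ j`. -/
def particle (μ : ℕ → ℕ) (i : ℕ) : ℤ := (μ i : ℤ) - (i : ℤ)

def hole (μ : ℕ → ℕ) (j : ℕ) : ℤ := (j : ℤ) + 1 - (conjP μ j : ℤ)

lemma strictAnti_particle {μ : ℕ → ℕ} (hμ : Antitone μ) : StrictAnti (particle μ) := by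
  intro i k hik
  have := hμ hik.le
  unfold particle
  omega

lemma particle_conjP (μ : ℕ → ℕ) (i : ℕ) : particle (conjP μ) i = 1 - hole μ i := by
  unfold particle hole
  ring

namespace IsPartition

variable {μ : ℕ → ℕ} (hμ : IsPartition μ)
include hμ

lemma lt_card_iff {P : ℕ → Prop} (hP : ∀ ⦃i j⦄, i ≤ j → P j → P i)
    (hPμ : ∀ i, P i → 0 < μ i) {i : ℕ} : i < Nat.card {i // P i} ↔ P i := by
  obtain ⟨N, hN⟩ := hμ.2
  refine Nat.lt_card_iff_of_isLowerSet (S := {i | P i}) (fun j i hij hi => hP hij hi) ?_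
  refine (Set.finite_Iio N).subset fun i hi => ?_
  by_contra hiN
  exact (hPμ i hi).ne' (hN i (not_lt.mp hiN))

lemma lt_conjP_iff {i j : ℕ} : i < conjP μ j ↔ j < μ i :=
  hμ.lt_card_iff (fun _ _ hij h => h.trans_le (hμ.1 hij)) (fun _ h => (Nat.zero_le _).trans_lt h)

lemma lt_depth_iff {i : ℕ} : i < depth μ ↔ i < μ i :=
  hμ.lt_card_iff (fun _ _ hij h => (hij.trans_lt h).trans_le (hμ.1 hij))
    (fun _ h => (Nat.zero_le _).trans_lt h)

lemma lt_plen_iff {i : ℕ} : i < plen μ ↔ 0 < μ i :=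
  hμ.lt_card_iff (fun _ _ hij h => h.trans_le (hμ.1 hij)) (fun _ h => h)

lemma conj : IsPartition (conjP μ) := by
  refine ⟨fun j j' hjj' => le_of_forall_lt fun c hc => ?_, μ 0, fun j hj => ?_⟩
  · rw [hμ.lt_conjP_iff] at hc ⊢
    exact hjj'.trans_lt hc
  · by_contra h
    have := hμ.lt_conjP_iff.mp (Nat.pos_of_ne_zero h)
    exact absurd (this.trans_le (hμ.1 (Nat.zero_le 0))) (not_lt.mpr hj)

lemma conjP_conjP : conjP (conjP μ) = μ := by
  ext i
  refine eq_of_forall_lt_iff fun c => ?_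
  rw [hμ.conj.lt_conjP_iff, hμ.lt_conjP_iff]

lemma depth_conjP : depth (conjP μ) = depth μ := by
  refine eq_of_forall_lt_iff fun c => ?_
  rw [hμ.conj.lt_depth_iff, hμ.lt_conjP_iff, hμ.lt_depth_iff]

lemma hole_conjP (j : ℕ) : hole (conjP μ) j = 1 - particle μ j := by
  unfold particle hole
  rw [hμ.conjP_conjP]
  ring

lemma strictMono_hole : StrictMono (hole μ) := by
  intro j j' hjj'
  have := hμ.conj.1 hjj'.le
  unfold hole
  omega

lemma hole_lt_particle {i j : ℕ} (h : j < μ i) : hole μ j < particle μ i := by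
  have := hμ.lt_conjP_iff.mpr h
  unfold hole particle
  omega

lemma particle_lt_hole {i j : ℕ} (h : μ i ≤ j) : particle μ i < hole μ j := by
  have : ¬ i < conjP μ j := by rw [hμ.lt_conjP_iff]; omega
  unfold hole particle
  omega

lemma particle_ne_hole (i j : ℕ) : particle μ i ≠ hole μ j := by
  rcases lt_or_ge j (μ i) with h | h
  · exact (hμ.hole_lt_particle h).ne'
  · exact (hμ.particle_lt_hole h).ne

lemma particle_pos_iff {i : ℕ} : 0 < particle μ i ↔ i < depth μ := by
  rw [hμ.lt_depth_iff, particle]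
  omega

lemma hole_pos_iff {j : ℕ} : 0 < hole μ j ↔ depth μ ≤ j := by
  rw [← not_lt, hμ.lt_depth_iff, ← hμ.lt_conjP_iff, hole]
  omega

lemma depth_le_apply {r : ℕ} (hr : r < depth μ) : depth μ ≤ μ r := by
  have hlast := hμ.lt_depth_iff.mp (Nat.sub_one_lt_of_lt hr)
  have := hμ.1 (Nat.le_sub_one_of_lt hr)
  omega

lemma disjoint_image_hole_image_particle (s t : Finset ℕ) :
    Disjoint (s.image (hole μ)) (t.image (particle μ)) := by
  simp only [disjoint_left, mem_image]
  rintro _ ⟨j, -, rfl⟩ ⟨k, -, hk⟩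
  exact hμ.particle_ne_hole k j hk

lemma image_hole_union_image_particle {r : ℕ} (hr : r < depth μ) :
    (Ico (depth μ) (μ r)).image (hole μ) ∪ (Ico (r + 1) (depth μ)).image (particle μ) =
      Ioo 0 (particle μ r) := by
  have hd := hμ.depth_le_apply hr
  refine eq_of_subset_of_card_le (union_subset ?_ ?_) ?_
  · refine image_subset_iff.mpr fun j hj => ?_
    rw [mem_Ico] at hj
    exact mem_Ioo.mpr ⟨hμ.hole_pos_iff.mpr hj.1, hμ.hole_lt_particle hj.2⟩
  · refine image_subset_iff.mpr fun k hk => ?_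
    rw [mem_Ico] at hk
    exact mem_Ioo.mpr ⟨hμ.particle_pos_iff.mpr hk.2, strictAnti_particle hμ.1 hk.1⟩
  · rw [card_union_of_disjoint (hμ.disjoint_image_hole_image_particle _ _),
      card_image_of_injective _ hμ.strictMono_hole.injective,
      card_image_of_injective _ (strictAnti_particle hμ.1).injective, Nat.card_Ico, Nat.card_Ico,
      Int.card_Ioo, particle]
    omega

lemma prod_hole_mul_prod_particle {M : Type*} [CommMonoid M] {r : ℕ} (hr : r < depth μ)
    (f : ℤ → M) :
    (∏ j ∈ Ico (depth μ) (μ r), f (hole μ j)) * ∏ k ∈ Ico (r + 1) (depth μ), f (particle μ k) =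
      ∏ t ∈ range (μ r - (r + 1)), f (t + 1) := by
  have hpart : particle μ r = ((μ r - (r + 1) : ℕ) : ℤ) + 1 := by
    have := hμ.lt_depth_iff.mp hr
    unfold particle
    omega
  rw [← prod_image hμ.strictMono_hole.injective.injOn,
    ← prod_image (strictAnti_particle hμ.1).injective.injOn,
    ← prod_union (hμ.disjoint_image_hole_image_particle _ _), hμ.image_hole_union_image_particle hr,
    hpart, Int.prod_Ioo_zero_natCast_add_one]

lemma prod_particle_mul_prod_hole {M : Type*} [CommMonoid M] {r : ℕ} (hr : r < depth μ)
    (f : ℤ → M) :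
    (∏ i ∈ Ico (depth μ) (conjP μ r), f (particle μ i)) *
        ∏ k ∈ Ico (r + 1) (depth μ), f (hole μ k) =
      ∏ t ∈ range (conjP μ r - (r + 1)), f (-t) := by
  have h := hμ.conj.prod_hole_mul_prod_particle (hμ.depth_conjP.symm ▸ hr) (fun x => f (1 - x))
  simp only [hμ.depth_conjP, hμ.hole_conjP, particle_conjP, sub_sub_cancel,
    sub_add_cancel_right] at h
  exact h

lemma depth_le_plen : depth μ ≤ plen μ :=
  le_of_forall_lt fun i hi => hμ.lt_plen_iff.mpr ((Nat.zero_le i).trans_lt (hμ.lt_depth_iff.mp hi))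

lemma prod_cells_eq_durfee_mul_arms_mul_legs {M : Type*} [CommMonoid M] (F : ℕ → ℕ → M) :
    ∏ i ∈ range (plen μ), ∏ j ∈ range (μ i), F i j =
      (∏ i ∈ range (depth μ), ∏ j ∈ range (depth μ), F i j) *
        (∏ i ∈ range (depth μ), ∏ j ∈ Ico (depth μ) (μ i), F i j) *
          ∏ j ∈ range (depth μ), ∏ i ∈ Ico (depth μ) (conjP μ j), F i j := by
  have hsquare : ∀ i ∈ range (depth μ), ∏ j ∈ range (μ i), F i j =
      (∏ j ∈ range (depth μ), F i j) * ∏ j ∈ Ico (depth μ) (μ i), F i j := fun i hi =>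
    (prod_range_mul_prod_Ico _ (hμ.depth_le_apply (mem_range.mp hi))).symm
  have hlegs : ∏ i ∈ Ico (depth μ) (plen μ), ∏ j ∈ range (μ i), F i j =
      ∏ j ∈ range (depth μ), ∏ i ∈ Ico (depth μ) (conjP μ j), F i j := by
    refine prod_comm' fun i j => ?_
    have hμd : μ (depth μ) ≤ depth μ := not_lt.mp (mt hμ.lt_depth_iff.mpr (lt_irrefl _))
    simp only [mem_Ico, mem_range, hμ.lt_conjP_iff, hμ.lt_plen_iff]
    constructor
    · rintro ⟨⟨hdi, -⟩, hj⟩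
      exact ⟨⟨hdi, hj⟩, hj.trans_le ((hμ.1 hdi).trans hμd)⟩
    · rintro ⟨⟨hdi, hj⟩, -⟩
      exact ⟨⟨hdi, (Nat.zero_le j).trans_lt hj⟩, hj⟩
  rw [← prod_range_mul_prod_Ico _ hμ.depth_le_plen, prod_congr rfl hsquare, prod_mul_distrib,
    hlegs]

theorem prod_cells_mul_prod_cross {R : Type*} [CommRing R] (a : ℤ → R) :
    (∏ i ∈ range (plen μ), ∏ j ∈ range (μ i), (a (particle μ i) - a (hole μ j))) *
      ∏ i ∈ range (depth μ), ∏ k ∈ Ico (i + 1) (depth μ),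
        ((a (particle μ i) - a (particle μ k)) * (a (hole μ k) - a (hole μ i))) =
    (∏ i ∈ range (depth μ),
        ((∏ t ∈ range (μ i - (i + 1)), (a (particle μ i) - a ((t : ℤ) + 1))) *
          ∏ t ∈ range (conjP μ i - (i + 1)), (a (-(t : ℤ)) - a (hole μ i)))) *
      ∏ i ∈ range (depth μ), ∏ j ∈ range (depth μ), (a (particle μ i) - a (hole μ j)) := by
  have hrow : ∀ i ∈ range (depth μ),
      ∏ t ∈ range (μ i - (i + 1)), (a (particle μ i) - a ((t : ℤ) + 1)) =
        (∏ j ∈ Ico (depth μ) (μ i), (a (particle μ i) - a (hole μ j))) *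
          ∏ k ∈ Ico (i + 1) (depth μ), (a (particle μ i) - a (particle μ k)) := fun i hi =>
    (hμ.prod_hole_mul_prod_particle (mem_range.mp hi) (fun x => a (particle μ i) - a x)).symm
  have hcol : ∀ j ∈ range (depth μ),
      ∏ t ∈ range (conjP μ j - (j + 1)), (a (-(t : ℤ)) - a (hole μ j)) =
        (∏ i ∈ Ico (depth μ) (conjP μ j), (a (particle μ i) - a (hole μ j))) *
          ∏ k ∈ Ico (j + 1) (depth μ), (a (hole μ k) - a (hole μ j)) := fun j hj =>
    (hμ.prod_particle_mul_prod_hole (mem_range.mp hj) (fun x => a x - a (hole μ j))).symm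
  simp only [hμ.prod_cells_eq_durfee_mul_arms_mul_legs, prod_mul_distrib]
  rw [prod_congr rfl hrow, prod_congr rfl hcol]
  simp only [prod_mul_distrib]
  ring

end IsPartition

/-- For a partition `μ = (p₁,…,p_d | q₁,…,q_d)` and any sequence `a`
with dual `â`:
`∏_{(i,j)∈μ}(a_{μᵢ-i+1} - a_{j-μ'ⱼ}) · ∏_{i<k≤d}(a_{pᵢ+1}-a_{p_k+1})(â_{qᵢ+1}-â_{q_k+1})`
`= ∏_{i=1}^{d}[∏_{t=1}^{pᵢ}(a_{pᵢ+1}-a_t)·∏_{t=1}^{qᵢ}(â_{qᵢ+1}-â_t)] · ∏_{i,j=1}^{d}(a_{pᵢ+1}+â_{qⱼ+1})`. -/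
theorem hook_product_identity
    (μ : ℕ → ℕ) (hμ : IsPartition μ) (a : ℤ → ℂ) :
    (∏ i ∈ Finset.range (plen μ), ∏ j ∈ Finset.range (μ i),
        (a ((μ i : ℤ) - (i : ℤ)) - a ((j : ℤ) + 1 - (conjP μ j : ℤ)))) *
      ∏ i ∈ Finset.range (depth μ), ∏ k ∈ Finset.Ico (i + 1) (depth μ),
        ((a ((frobP μ i : ℤ) + 1) - a ((frobP μ k : ℤ) + 1)) *
          (adual a ((frobQ μ i : ℤ) + 1) - adual a ((frobQ μ k : ℤ) + 1))) =
    (∏ i ∈ Finset.range (depth μ),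
        ((∏ t ∈ Finset.range (frobP μ i), (a ((frobP μ i : ℤ) + 1) - a ((t : ℤ) + 1))) *
          ∏ t ∈ Finset.range (frobQ μ i),
            (adual a ((frobQ μ i : ℤ) + 1) - adual a ((t : ℤ) + 1)))) *
      ∏ i ∈ Finset.range (depth μ), ∏ j ∈ Finset.range (depth μ),
        (a ((frobP μ i : ℤ) + 1) + adual a ((frobQ μ j : ℤ) + 1)) := by
  have hfrobP : ∀ i ∈ range (depth μ), (frobP μ i : ℤ) + 1 = particle μ i := by
    intro i hi
    have := hμ.lt_depth_iff.mp (mem_range.mp hi)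
    unfold frobP particle
    omega
  have hfrobQ : ∀ i ∈ range (depth μ), adual a ((frobQ μ i : ℤ) + 1) = -a (hole μ i) := by
    intro i hi
    have := hμ.lt_conjP_iff.mpr (hμ.lt_depth_iff.mp (mem_range.mp hi))
    rw [adual, hole, frobQ]
    congr 2
    omega
  have hadual : ∀ t : ℕ, adual a ((t : ℤ) + 1) = -a (-(t : ℤ)) := fun t => by
    rw [adual, sub_add_cancel_right]
  convert hμ.prod_cells_mul_prod_cross a using 2
  · rfl
  · refine prod_congr rfl fun i hi => prod_congr rfl fun k hk => ?_
    have hk' : k ∈ range (depth μ) := mem_range.mpr (mem_Ico.mp hk).2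
    rw [hfrobP i hi, hfrobP k hk', hfrobQ i hi, hfrobQ k hk', neg_sub_neg]
  · refine prod_congr rfl fun i hi => ?_
    simp only [hfrobP i hi, hfrobQ i hi, hadual, neg_sub_neg]
    rfl
  · refine prod_congr rfl fun i hi => prod_congr rfl fun j hj => ?_
    rw [hfrobP i hi, hfrobQ j hj, sub_eq_add_neg]

end
end
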